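/- Let λ = 1/2, ω ∈ ℝ, E ∈ ℝ with |E| ≤ 2.5, N ≥ 1, and P = 2001². If L_N(1/2,E) < 10⁻², then ℙ(Q_N(P) ≥ 0.08) ≤ 1/14700, where the probability is with respect to the i.i.d. uniform sample points. -/

import Mathlib

open scoped Matrix.Norms.L2Operator

noncomputable section

/-- Skew-shift potential `v_n(x,y) = 2 cos(2π(n(n−1)/2·ω + n·y + x))`. -/
def skewV (ω : ℝ) (n : ℤ) (x y : ℝ) : ℝ :=
  2 * Real.cos (2 * Real.pi * ((n * (n - 1) : ℝ) / 2 * ω + (n : ℝ) * y + x))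

/-- One-step transfer matrix `A_j`. -/
def Amat (lam E ω : ℝ) (j : ℤ) (x y : ℝ) : Matrix (Fin 2) (Fin 2) ℝ :=
  !![E - lam * skewV ω j x y, -1; 1, 0]

/-- n-step transfer matrix `M_n = A_n ⋯ A_1`. -/
def Mmat (lam E ω : ℝ) : ℕ → ℝ → ℝ → Matrix (Fin 2) (Fin 2) ℝ
  | 0, _, _ => 1
  | (n+1), x, y => Amat lam E ω (n + 1 : ℕ) x y * Mmat lam E ω n x y

/-- The unit square `[0,1]²`. -/
def unitSq : Set (ℝ × ℝ) := Set.Icc (0:ℝ) 1 ×ˢ Set.Icc (0:ℝ) 1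

/-- Non-averaged finite-size Lyapunov exponent `u_n(x,y)`. -/
def uFS (lam E ω : ℝ) (n : ℕ) (x y : ℝ) : ℝ :=
  (1 / n : ℝ) * Real.log ‖Mmat lam E ω n x y‖

/-- Finite-size Lyapunov exponent `L_n(λ,E)`. -/
def LFS (lam E ω : ℝ) (n : ℕ) : ℝ :=
  (1 / n : ℝ) * ∫ p in unitSq, Real.log ‖Mmat lam E ω n p.1 p.2‖

/-!
Every one-step matrix `A_j` has determinant `1` and, for `λ = 1/2` and `|E| ≤ 5/2`,
Hilbert–Schmidt norm at most `√14.25 < e²`. Hence `1 ≤ ‖M_N‖ ≤ e^{2N}`, so every sample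
`u_N(x_i, y_i)` lies in `[0, 2]` and has variance at most `1`, while its mean is `L_N < 1/100`
because the points are uniform. By independence the sample mean has variance at most `1/P`, and
Chebyshev's inequality bounds the probability that it exceeds its expectation by `7/100` by
`1 / (P · (7/100)²) < 1/14700`.
-/

namespace Matrix
variable {m n : Type*} [Fintype m] [Fintype n] [DecidableEq n]

theorem sum_sq_apply_le_l2_opNorm_sq (A : Matrix m n ℝ) (j : n) :
    ∑ i, A i j ^ 2 ≤ ‖A‖ ^ 2 := by
  have h := A.l2_opNorm_mulVec (EuclideanSpace.single j 1)
  simp only [EuclideanSpace.single, PiLp.norm_single, norm_one, mul_one,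
    EuclideanSpace.norm_eq] at h
  calc ∑ i, A i j ^ 2 = √(∑ i, A i j ^ 2) ^ 2 := (Real.sq_sqrt (by positivity)).symm
    _ ≤ ‖A‖ ^ 2 := by
      gcongr
      simpa [mulVec_single, sq_abs] using h

theorem l2_opNorm_le_sqrt_sum_sq (A : Matrix m n ℝ) : ‖A‖ ≤ √(∑ i, ∑ j, A i j ^ 2) := by
  rw [l2_opNorm_def]
  refine ContinuousLinearMap.opNorm_le_bound _ (Real.sqrt_nonneg _) fun x ↦ ?_
  rw [← Real.sqrt_sq (norm_nonneg x), ← Real.sqrt_mul (by positivity), EuclideanSpace.norm_eq]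
  gcongr
  rw [EuclideanSpace.norm_eq, Real.sq_sqrt (by positivity), Finset.sum_mul]
  refine Finset.sum_le_sum fun i _ ↦ ?_
  simpa [mulVec, dotProduct, Real.norm_eq_abs, sq_abs] using
    Finset.sum_mul_sq_le_sq_mul_sq Finset.univ (A i) (fun j ↦ x j)

theorem abs_det_le_l2_opNorm_sq (A : Matrix (Fin 2) (Fin 2) ℝ) : |A.det| ≤ ‖A‖ ^ 2 := by
  have h₀ := A.sum_sq_apply_le_l2_opNorm_sq 0
  have h₁ := A.sum_sq_apply_le_l2_opNorm_sq 1
  simp only [Fin.sum_univ_two] at h₀ h₁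
  -- Lagrange's identity: `(a² + c²)(b² + d²) = (ad - bc)² + (ab + cd)²`
  have lagrange : A.det ^ 2 ≤ (A 0 0 ^ 2 + A 1 0 ^ 2) * (A 0 1 ^ 2 + A 1 1 ^ 2) := by
    rw [det_fin_two]
    nlinarith [sq_nonneg (A 0 0 * A 0 1 + A 1 0 * A 1 1)]
  refine abs_le_of_sq_le_sq (lagrange.trans ?_) (by positivity)
  rw [sq (‖A‖ ^ 2)]
  exact mul_le_mul h₀ h₁ (by positivity) (by positivity)

theorem one_le_l2_opNorm_of_det_eq_one {A : Matrix (Fin 2) (Fin 2) ℝ} (hA : A.det = 1) :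
    1 ≤ ‖A‖ := by
  have := A.abs_det_le_l2_opNorm_sq
  rw [hA, abs_one] at this
  exact one_le_sq_iff_one_le_abs _ |>.mp this |>.trans_eq (abs_norm A)

end Matrix

section TransferMatrix

variable (lam E ω : ℝ)

theorem abs_skewV_le (n : ℤ) (x y : ℝ) : |skewV ω n x y| ≤ 2 := by
  rw [skewV, abs_mul, abs_two]
  exact mul_le_of_le_one_right zero_le_two (Real.abs_cos_le_one _)

theorem norm_Amat_le (j : ℤ) (x y : ℝ) :
    ‖Amat lam E ω j x y‖ ≤ √((|E| + 2 * |lam|) ^ 2 + 2) := by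
  refine (Amat lam E ω j x y).l2_opNorm_le_sqrt_sum_sq.trans (Real.sqrt_le_sqrt ?_)
  have hdiag : |E - lam * skewV ω j x y| ≤ |E| + 2 * |lam| := by
    calc _ ≤ |E| + |lam| * |skewV ω j x y| := by rw [← abs_mul]; exact abs_sub _ _
      _ ≤ |E| + |lam| * 2 := by gcongr; exact abs_skewV_le ω j x y
      _ = _ := by ring
  simp only [Fin.sum_univ_two, Amat, Matrix.of_apply, Matrix.cons_val', Matrix.cons_val_zero,
    Matrix.cons_val_one, Matrix.empty_val', Matrix.cons_val_fin_one]
  nlinarith [sq_abs (E - lam * skewV ω j x y), abs_nonneg (E - lam * skewV ω j x y)]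

theorem det_Amat (j : ℤ) (x y : ℝ) : (Amat lam E ω j x y).det = 1 := by
  simp [Amat, Matrix.det_fin_two_of]

theorem det_Mmat (n : ℕ) (x y : ℝ) : (Mmat lam E ω n x y).det = 1 := by
  induction n with
  | zero => simp [Mmat]
  | succ n ih => rw [Mmat, Matrix.det_mul, ih, mul_one, det_Amat]

theorem norm_Mmat_le_pow {x y C : ℝ} (hA : ∀ j : ℤ, ‖Amat lam E ω j x y‖ ≤ C) (n : ℕ) :
    ‖Mmat lam E ω n x y‖ ≤ C ^ n := by
  induction n with
  | zero => simp [Mmat]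
  | succ n ih =>
    calc ‖Mmat lam E ω (n + 1) x y‖ ≤ ‖Amat lam E ω (n + 1 : ℕ) x y‖ * ‖Mmat lam E ω n x y‖ :=
          Matrix.l2_opNorm_mul _ _
      _ ≤ C * C ^ n := by gcongr; exacts [(norm_nonneg _).trans (hA 0), hA _]
      _ = C ^ (n + 1) := by ring

theorem uFS_nonneg (n : ℕ) (x y : ℝ) : 0 ≤ uFS lam E ω n x y :=
  mul_nonneg (by positivity)
    (Real.log_nonneg (Matrix.one_le_l2_opNorm_of_det_eq_one (det_Mmat lam E ω n x y)))

theorem uFS_le_log {x y C : ℝ} (hA : ∀ j : ℤ, ‖Amat lam E ω j x y‖ ≤ C) (n : ℕ) :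
    uFS lam E ω n x y ≤ Real.log C := by
  have hC : 0 ≤ Real.log C := Real.log_nonneg
    ((Matrix.one_le_l2_opNorm_of_det_eq_one (det_Amat lam E ω 0 x y)).trans (hA 0))
  have hM : Real.log ‖Mmat lam E ω n x y‖ ≤ n * Real.log C := by
    rw [← Real.log_pow]
    exact Real.log_le_log (zero_lt_one.trans_le (Matrix.one_le_l2_opNorm_of_det_eq_one
      (det_Mmat lam E ω n x y))) (norm_Mmat_le_pow lam E ω hA n)
  calc uFS lam E ω n x y ≤ (1 / n : ℝ) * (n * Real.log C) :=
        mul_le_mul_of_nonneg_left hM (by positivity)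
    _ ≤ Real.log C := by
      rw [← mul_assoc, one_div_mul_eq_div]
      exact mul_le_of_le_one_left hC (div_self_le_one _)

theorem continuous_Mmat (n : ℕ) :
    Continuous fun p : ℝ × ℝ ↦ Mmat lam E ω n p.1 p.2 := by
  induction n with
  | zero => exact continuous_const
  | succ n ih =>
    refine Continuous.matrix_mul (continuous_matrix fun i j ↦ ?_) ih
    fin_cases i <;> fin_cases j <;> simp [Amat, skewV] <;> fun_prop

theorem measurable_uFS (n : ℕ) :
    Measurable fun p : ℝ × ℝ ↦ uFS lam E ω n p.1 p.2 :=
  (Real.measurable_log.comp (continuous_Mmat lam E ω n).norm.measurable).const_mul _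

theorem setIntegral_unitSq_uFS (n : ℕ) :
    ∫ p in unitSq, uFS lam E ω n p.1 p.2 = LFS lam E ω n :=
  MeasureTheory.integral_const_mul _ _

end TransferMatrix

theorem uFS_mem_Icc {E : ℝ} (hE : |E| ≤ 2.5) (ω : ℝ) (n : ℕ) (x y : ℝ) :
    uFS (1 / 2) E ω n x y ∈ Set.Icc 0 2 := by
  refine ⟨uFS_nonneg _ _ _ n x y, (uFS_le_log _ _ _ (norm_Amat_le _ _ _ · x y) n).trans ?_⟩
  rw [Real.log_le_iff_le_exp (by positivity)]
  calc √((|E| + 2 * |(1 / 2 : ℝ)|) ^ 2 + 2) ≤ 1 + 2 + 2 ^ 2 / 2 := by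
        rw [Real.sqrt_le_left (by norm_num)]
        nlinarith [abs_nonneg E]
    _ ≤ Real.exp 2 := Real.quadratic_le_exp_of_nonneg zero_le_two

open MeasureTheory ProbabilityTheory

theorem meas_sampleMean_ge_le_of_iIndepFun {Ω ι : Type*} [MeasurableSpace Ω] {μ : Measure Ω}
    [IsProbabilityMeasure μ] [Fintype ι] [Nonempty ι] {X : ι → Ω → ℝ} {a b m t : ℝ}
    (hX : ∀ i, AEMeasurable (X i) μ) (hindep : iIndepFun X μ)
    (hbdd : ∀ i, ∀ᵐ ω ∂μ, X i ω ∈ Set.Icc a b) (hmean : ∀ i, μ[X i] = m) (ht : 0 < t) :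
    μ {ω | m + t ≤ (∑ i, X i ω) / Fintype.card ι}
      ≤ ENNReal.ofReal (((b - a) / 2) ^ 2 / (Fintype.card ι * t ^ 2)) := by
  set P : ℝ := (Fintype.card ι : ℝ)
  have hP : 0 < P := by positivity
  have hL2 : ∀ i, MemLp (X i) 2 μ := fun i ↦ memLp_of_bounded (hbdd i) (hX i).aestronglyMeasurable 2
  have hS : MemLp (∑ i, X i) 2 μ := memLp_finsetSum' _ fun i _ ↦ hL2 i
  have hmeanS : μ[∑ i, X i] = P * m := by
    simp only [Finset.sum_apply]
    rw [integral_finsetSum _ fun i _ ↦ (hL2 i).integrable one_le_two]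
    simp [hmean, P]
  have hvarS : variance (∑ i, X i) μ ≤ P * ((b - a) / 2) ^ 2 := by
    rw [IndepFun.variance_sum (fun i _ ↦ hL2 i) fun i _ j _ hij ↦ hindep.indepFun hij]
    calc ∑ i, variance (X i) μ ≤ ∑ _i : ι, ((b - a) / 2) ^ 2 :=
          Finset.sum_le_sum fun i _ ↦ variance_le_sq_of_bounded (hbdd i) (hX i)
      _ = P * ((b - a) / 2) ^ 2 := by simp [P]
  have hdev : {ω | m + t ≤ (∑ i, X i ω) / P} ⊆ {ω | P * t ≤ |(∑ i, X i) ω - μ[∑ i, X i]|} := by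
    intro ω (hω : m + t ≤ (∑ i, X i ω) / P)
    show P * t ≤ |(∑ i, X i) ω - μ[∑ i, X i]|
    rw [hmeanS, Finset.sum_apply]
    rw [le_div_iff₀ hP] at hω
    exact le_abs.mpr (Or.inl (by linarith))
  calc μ {ω | m + t ≤ (∑ i, X i ω) / P}
      ≤ ENNReal.ofReal (variance (∑ i, X i) μ / (P * t) ^ 2) :=
        (measure_mono hdev).trans (meas_ge_le_variance_div_sq hS (by positivity))
    _ ≤ ENNReal.ofReal (P * ((b - a) / 2) ^ 2 / (P * t) ^ 2) := by gcongr
    _ = ENNReal.ofReal (((b - a) / 2) ^ 2 / (P * t ^ 2)) := by congr 1; field_simp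

theorem monte_carlo_consequence_general
    (ω E : ℝ) (hE : |E| ≤ 2.5) (N : ℕ)
    {Ω : Type*} [MeasurableSpace Ω] (μ : MeasureTheory.Measure Ω)
    [MeasureTheory.IsProbabilityMeasure μ]
    (Z : Fin (2001^2) → Ω → ℝ × ℝ)
    (hmeas : ∀ i, Measurable (Z i))
    (hindep : ProbabilityTheory.iIndepFun Z μ)
    (hunif : ∀ i, MeasureTheory.Measure.map (Z i) μ
        = MeasureTheory.volume.restrict unitSq)
    (hL : LFS (1/2) E ω N < 10^(-2 : ℤ)) :
    μ {w | (1 / (2001^2 : ℝ)) *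
            (∑ i : Fin (2001^2), uFS (1/2) E ω N (Z i w).1 (Z i w).2)
          ≥ 0.08}
      ≤ ENNReal.ofReal (1 / 14700) := by
  set u : ℝ × ℝ → ℝ := fun p ↦ uFS (1 / 2) E ω N p.1 p.2
  have hu : Measurable u := measurable_uFS _ _ _ N
  have hmean : ∀ i, μ[u ∘ Z i] = LFS (1 / 2) E ω N := fun i ↦ by
    rw [Function.comp_def, ← integral_map (hmeas i).aemeasurable hu.aestronglyMeasurable, hunif i]
    exact setIntegral_unitSq_uFS _ _ _ N
  have chebyshev := meas_sampleMean_ge_le_of_iIndepFun (t := 7 / 100)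
    (fun i ↦ (hu.comp (hmeas i)).aemeasurable) (hindep.comp _ fun _ ↦ hu)
    (fun i ↦ ae_of_all _ fun w ↦ uFS_mem_Icc hE ω N _ _) hmean (by norm_num)
  refine (measure_mono ?_).trans (chebyshev.trans ?_)
  · intro w (hw : (0.08 : ℝ) ≤ _)
    have hL' : LFS (1 / 2) E ω N < 1 / 100 := by norm_num at hL ⊢; exact hL
    show _ ≤ (∑ i, u (Z i w)) / _
    simp only [Fintype.card_fin, Nat.cast_pow, Nat.cast_ofNat]
    linarith
  · rw [Fintype.card_fin]
    gcongr <;> norm_num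

/-- If `λ = 1/2`, `|E| ≤ 2.5`, `N ≥ 1`, `P = 2001²` and `L_N(1/2,E) < 10⁻²`,
then the Monte-Carlo estimator built from i.i.d. uniform points on `[0,1]²`
satisfies `ℙ(Q_N(P) ≥ 0.08) ≤ 1/14700`. -/
theorem monte_carlo_consequence
    (ω E : ℝ) (hE : |E| ≤ 2.5) (N : ℕ) (hN : 1 ≤ N)
    {Ω : Type*} [MeasurableSpace Ω] (μ : MeasureTheory.Measure Ω)
    [MeasureTheory.IsProbabilityMeasure μ]
    (Z : Fin (2001^2) → Ω → ℝ × ℝ)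
    (hmeas : ∀ i, Measurable (Z i))
    (hindep : ProbabilityTheory.iIndepFun Z μ)
    (hunif : ∀ i, MeasureTheory.Measure.map (Z i) μ
        = MeasureTheory.volume.restrict unitSq)
    (hL : LFS (1/2) E ω N < 10^(-2 : ℤ)) :
    μ {w | (1 / (2001^2 : ℝ)) *
            (∑ i : Fin (2001^2), uFS (1/2) E ω N (Z i w).1 (Z i w).2)
          ≥ 0.08}
      ≤ ENNReal.ofReal (1 / 14700) :=
  monte_carlo_consequence_general ω E hE N μ Z hmeas hindep hunif hL

end
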